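/- arXiv:2306.00897 — 4 statements merged into one kernel-verified Lean document; each statement's English description precedes it below -/
import Mathlib

section
/- For U ∈ ℝ^{m×k}, V ∈ ℝ^{n×k} with orthonormal columns and any Z ∈ ℝ^{m×n}, setting P₁ := ZVVᵀ and P₂ := UUᵀZ, one has max{‖P₁‖_F², ‖P₂‖_F²} ≥ (1/2)‖ZVVᵀ + UUᵀZ − UUᵀZVVᵀ‖_F². -/
open Matrix

/-- Frobenius inner product of two real matrices. -/
def frobInner {m n : ℕ} (A B : Matrix (Fin m) (Fin n) ℝ) : ℝ := ∑ i, ∑ j, A i j * B i j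

/-- Frobenius norm of a real matrix. -/
noncomputable def frobNorm {m n : ℕ} (A : Matrix (Fin m) (Fin n) ℝ) : ℝ :=
  Real.sqrt (frobInner A A)

/-- Spectral norm (largest singular value) of a real matrix, as the operator norm
of the induced linear map between Euclidean spaces. -/
noncomputable def specNorm {m n : ℕ} (A : Matrix (Fin m) (Fin n) ℝ) : ℝ :=
  ‖LinearMap.toContinuousLinearMap (Matrix.toEuclideanLin A)‖

lemma frobInner_comm {m n : ℕ} (A B : Matrix (Fin m) (Fin n) ℝ) :
    frobInner A B = frobInner B A := by simp [frobInner, mul_comm]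

lemma frobInner_add_left {m n : ℕ} (A B C : Matrix (Fin m) (Fin n) ℝ) :
    frobInner (A + B) C = frobInner A C + frobInner B C := by
  simp [frobInner, add_mul, Finset.sum_add_distrib]

lemma frobInner_sub_left {m n : ℕ} (A B C : Matrix (Fin m) (Fin n) ℝ) :
    frobInner (A - B) C = frobInner A C - frobInner B C := by
  simp [frobInner, sub_mul, Finset.sum_sub_distrib]

lemma frobInner_add_right {m n : ℕ} (A B C : Matrix (Fin m) (Fin n) ℝ) :
    frobInner A (B + C) = frobInner A B + frobInner A C := by
  rw [frobInner_comm, frobInner_add_left, frobInner_comm B, frobInner_comm C]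

lemma frobInner_sub_right {m n : ℕ} (A B C : Matrix (Fin m) (Fin n) ℝ) :
    frobInner A (B - C) = frobInner A B - frobInner A C := by
  rw [frobInner_comm, frobInner_sub_left, frobInner_comm B, frobInner_comm C]

lemma frobInner_nonneg {m n : ℕ} (A : Matrix (Fin m) (Fin n) ℝ) :
    0 ≤ frobInner A A :=
  Finset.sum_nonneg fun _ _ => Finset.sum_nonneg fun _ _ => mul_self_nonneg _

lemma frobNorm_sq {m n : ℕ} (A : Matrix (Fin m) (Fin n) ℝ) :
    frobNorm A ^ 2 = frobInner A A := Real.sq_sqrt (frobInner_nonneg A)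

lemma frobInner_eq_trace {m n : ℕ} (A B : Matrix (Fin m) (Fin n) ℝ) :
    frobInner A B = Matrix.trace (Aᵀ * B) := by
  simp only [frobInner, Matrix.trace, Matrix.diag, Matrix.mul_apply, Matrix.transpose_apply]
  exact Finset.sum_comm

/-- **Gauss–Southwell bound.** For `U`, `V` with orthonormal columns and any `Z`,
with `P₁ = Z V Vᵀ` and `P₂ = U Uᵀ Z`, one has
`max {‖P₁‖_F², ‖P₂‖_F²} ≥ (1/2) ‖Z V Vᵀ + U Uᵀ Z - U Uᵀ Z V Vᵀ‖_F²`. -/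
theorem max_projected_gradient_ge_half_tangent
    {m n k : ℕ} (U : Matrix (Fin m) (Fin k) ℝ) (V : Matrix (Fin n) (Fin k) ℝ)
    (hU : Uᵀ * U = 1) (hV : Vᵀ * V = 1) (Z : Matrix (Fin m) (Fin n) ℝ) :
    max (frobNorm (Z * V * Vᵀ) ^ 2) (frobNorm (U * Uᵀ * Z) ^ 2) ≥
      1 / 2 * frobNorm (Z * V * Vᵀ + U * Uᵀ * Z - U * Uᵀ * Z * V * Vᵀ) ^ 2 := by
  set A := Z * V * Vᵀ with hA
  set B := U * Uᵀ * Z with hB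
  set C := U * Uᵀ * Z * V * Vᵀ with hC
  set W := Uᵀ * Z * V with hW
  have hU' : ∀ {p : ℕ} (X : Matrix (Fin k) (Fin p) ℝ), Uᵀ * (U * X) = X := fun X => by
    rw [← Matrix.mul_assoc, hU, Matrix.one_mul]
  have hV' : ∀ {p : ℕ} (X : Matrix (Fin k) (Fin p) ℝ), Vᵀ * (V * X) = X := fun X => by
    rw [← Matrix.mul_assoc, hV, Matrix.one_mul]
  have hAB : frobInner A B = frobInner W W := by
    rw [frobInner_eq_trace, frobInner_eq_trace, hA, hB, hW]
    simp only [Matrix.transpose_mul, Matrix.transpose_transpose, Matrix.mul_assoc]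
    rw [Matrix.trace_mul_comm]
    simp [Matrix.mul_assoc]
  have hAC : frobInner A C = frobInner W W := by
    rw [frobInner_eq_trace, frobInner_eq_trace, hA, hC, hW]
    simp only [Matrix.transpose_mul, Matrix.transpose_transpose, Matrix.mul_assoc]
    rw [Matrix.trace_mul_comm]
    simp [Matrix.mul_assoc, hV', hV]
  have hBC : frobInner B C = frobInner W W := by
    rw [frobInner_eq_trace, frobInner_eq_trace, hB, hC, hW]
    simp only [Matrix.transpose_mul, Matrix.transpose_transpose, Matrix.mul_assoc]
    rw [Matrix.trace_mul_comm]
    simp only [Matrix.mul_assoc, hU', hV']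
    rw [Matrix.trace_mul_comm]
    have h2 := Matrix.trace_mul_comm W Wᵀ
    simp only [hW, Matrix.transpose_mul, Matrix.transpose_transpose, Matrix.mul_assoc] at h2
    simpa [Matrix.mul_assoc] using h2
  have hCC : frobInner C C = frobInner W W := by
    rw [frobInner_eq_trace, frobInner_eq_trace, hC, hW]
    simp only [Matrix.transpose_mul, Matrix.transpose_transpose, Matrix.mul_assoc]
    rw [Matrix.trace_mul_comm]
    simp [Matrix.mul_assoc, hU', hV', hU, hV]
  have key : frobInner (A + B - C) (A + B - C)
      = frobInner A A + frobInner B B - frobInner W W := by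
    simp only [frobInner_sub_left, frobInner_add_left, frobInner_sub_right,
      frobInner_add_right]
    rw [hAB, hAC, hBC, hCC, frobInner_comm B A, hAB, frobInner_comm C A, hAC,
      frobInner_comm C B, hBC]
    ring
  have hWn := frobInner_nonneg W
  rw [ge_iff_le, le_max_iff]
  rcases le_total (frobInner A A) (frobInner B B) with h | h
  · right
    rw [frobNorm_sq, frobNorm_sq]
    linarith [key]
  · left
    rw [frobNorm_sq, frobNorm_sq]
    linarith [key]
end

section
/- Let f : ℝ^d → ℝ be twice continuously differentiable with ∇f(0) = 0 and Hessian H := ∇²f(0) positive-definite with smallest eigenvalue λ_min > 0. Then for every ε > 0 there is a neighborhood N of 0 such that 0 < f(x) − f(0) ≤ (1/(2λ_min) + ε)·‖∇f(x)‖² for all x ∈ N with x ≠ 0. -/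
/-!
Write `g = ∇f` and `H = Dg(0)`. Since `g 0 = 0`, for every `δ > 0` we have
`‖g y - H y‖ ≤ δ ‖y‖` near `0`, and integrating `t ↦ ⟪g (t • x), x⟫` over `[0, 1]` gives
`|f x - f 0 - ⟪H x, x⟫ / 2| ≤ δ ‖x‖²`. Coercivity `⟪H x, x⟫ ≥ λ ‖x‖²` yields positivity once
`δ < λ / 2`. It also gives `‖H x‖ ≥ λ ‖x‖`, hence `‖x‖ ≤ ‖g x‖ / (λ - δ)`, and with
Cauchy–Schwarz `f x - f 0 ≤ (λ + 2δ) / (2 (λ - δ)²) ‖g x‖²`; this constant tends to `1 / (2λ)`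
as `δ → 0`.
-/

open RealInnerProductSpace Metric Set Filter

section

variable {E : Type*} [NormedAddCommGroup E] [InnerProductSpace ℝ E] [CompleteSpace E]

theorem ContDiff.differentiable_gradient {f : E → ℝ} {n : WithTop ℕ∞} (hf : ContDiff ℝ n f)
    (hn : 2 ≤ n) : Differentiable ℝ (gradient f) :=
  (InnerProductSpace.toDual ℝ E).symm.differentiable.comp
    ((hf.fderiv_right hn).differentiable one_ne_zero)

theorem abs_sub_sub_half_inner_le_of_norm_gradient_sub_le {f : E → ℝ} {H : E →L[ℝ] E}
    {δ r : ℝ} (hf : ∀ y ∈ ball (0 : E) r, DifferentiableAt ℝ f y)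
    (hH : ∀ y ∈ ball (0 : E) r, ‖gradient f y - H y‖ ≤ δ * ‖y‖) {x : E}
    (hx : x ∈ ball 0 r) :
    |f x - f 0 - ⟪H x, x⟫ / 2| ≤ δ * ‖x‖ ^ 2 := by
  have hseg : ∀ t ∈ Icc (0 : ℝ) 1, t • x ∈ ball (0 : E) r := fun t ht =>
    (convex_ball 0 r).smul_mem_of_zero_mem (mem_ball_self (pos_of_mem_ball hx)) hx ht
  have hderiv : ∀ t ∈ Icc (0 : ℝ) 1, HasDerivWithinAt (fun t => f (t • x) - t ^ 2 / 2 * ⟪H x, x⟫)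
      ⟪gradient f (t • x) - H (t • x), x⟫ (Icc 0 1) t := by
    intro t ht
    have hline : HasDerivAt (fun t : ℝ => f (t • x)) ⟪gradient f (t • x), x⟫ t := by
      have := (hf _ (hseg t ht)).hasFDerivAt.comp_hasDerivAt t ((hasDerivAt_id t).smul_const x)
      rw [one_smul, ← inner_gradient_left] at this
      exact this
    have hquad : HasDerivAt (fun t : ℝ => t ^ 2 / 2 * ⟪H x, x⟫) (t * ⟪H x, x⟫) t :=
      (((hasDerivAt_pow 2 t).div_const 2).mul_const _).congr_deriv (by ring)
    refine (hline.sub hquad).hasDerivWithinAt.congr_deriv ?_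
    rw [map_smul, inner_sub_left, real_inner_smul_left]
  have hbound : ∀ t ∈ Ico (0 : ℝ) 1, ‖⟪gradient f (t • x) - H (t • x), x⟫‖ ≤ δ * ‖x‖ ^ 2 := by
    intro t ht
    have hδx : 0 ≤ δ * ‖x‖ := (norm_nonneg _).trans (hH x hx)
    have htx := hH _ (hseg t (Ico_subset_Icc_self ht))
    rw [norm_smul, Real.norm_of_nonneg ht.1] at htx
    calc ‖⟪gradient f (t • x) - H (t • x), x⟫‖
        ≤ ‖gradient f (t • x) - H (t • x)‖ * ‖x‖ := norm_inner_le_norm _ _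
      _ ≤ δ * (t * ‖x‖) * ‖x‖ := by gcongr
      _ ≤ δ * ‖x‖ ^ 2 := by
        nlinarith [mul_nonneg (mul_nonneg hδx (norm_nonneg x)) (sub_nonneg.2 ht.2.le)]
  have := norm_image_sub_le_of_norm_deriv_le_segment_01' hderiv hbound
  simp only [one_smul, zero_smul, one_pow, zero_pow two_ne_zero, zero_div, zero_mul,
    sub_zero, Real.norm_eq_abs] at this
  convert this using 2
  ring

end

section

variable {E : Type*} [NormedAddCommGroup E] [InnerProductSpace ℝ E]

theorem mul_norm_le_norm_of_mul_norm_sq_le_inner {lam : ℝ} {w x : E}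
    (h : lam * ‖x‖ ^ 2 ≤ ⟪w, x⟫) : lam * ‖x‖ ≤ ‖w‖ := by
  rcases (norm_nonneg x).eq_or_lt with hx | hx
  · rw [← hx, mul_zero]
    exact norm_nonneg w
  · refine le_of_mul_le_mul_right ?_ hx
    calc lam * ‖x‖ * ‖x‖ = lam * ‖x‖ ^ 2 := by ring
      _ ≤ ‖w‖ * ‖x‖ := h.trans (real_inner_le_norm w x)

theorem le_mul_norm_sq_of_mul_norm_sq_le_inner {lam δ Δ : ℝ} {v w x : E}
    (hw : lam * ‖x‖ ^ 2 ≤ ⟪w, x⟫) (hδ : 0 ≤ δ) (hδlam : δ < lam)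
    (hv : ‖v - w‖ ≤ δ * ‖x‖) (hΔ : Δ ≤ ⟪w, x⟫ / 2 + δ * ‖x‖ ^ 2) :
    Δ ≤ (lam + 2 * δ) / (2 * (lam - δ) ^ 2) * ‖v‖ ^ 2 := by
  have hwv : ‖w‖ ≤ ‖v‖ + δ * ‖x‖ := (norm_le_norm_add_norm_sub v w).trans (by gcongr)
  have hxv : ‖x‖ ≤ ‖v‖ / (lam - δ) := by
    rw [le_div_iff₀ (sub_pos.2 hδlam)]
    linarith [mul_norm_le_norm_of_mul_norm_sq_le_inner hw]
  have hinner : ⟪w, x⟫ ≤ (‖v‖ + δ * ‖x‖) * ‖x‖ :=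
    (real_inner_le_norm w x).trans (by gcongr)
  calc Δ ≤ ‖v‖ * ‖x‖ / 2 + 3 * δ * ‖x‖ ^ 2 / 2 := by linarith
    _ ≤ ‖v‖ * (‖v‖ / (lam - δ)) / 2 + 3 * δ * (‖v‖ / (lam - δ)) ^ 2 / 2 := by gcongr
    _ = (lam + 2 * δ) / (2 * (lam - δ) ^ 2) * ‖v‖ ^ 2 := by
      field_simp [(sub_pos.2 hδlam).ne']
      ring

end

theorem exists_pos_lt_half_and_div_le {lam ε : ℝ} (hlam : 0 < lam) (hε : 0 < ε) :
    ∃ δ, 0 < δ ∧ δ < lam / 2 ∧ (lam + 2 * δ) / (2 * (lam - δ) ^ 2) ≤ 1 / (2 * lam) + ε := by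
  have hcont : ContinuousAt (fun δ : ℝ => (lam + 2 * δ) / (2 * (lam - δ) ^ 2)) 0 :=
    ContinuousAt.div (by fun_prop) (by fun_prop) (by simp [hlam.ne'])
  have hlim : (lam + 2 * 0) / (2 * (lam - 0) ^ 2) < 1 / (2 * lam) + ε := by
    have : (lam + 2 * 0) / (2 * (lam - 0) ^ 2) = 1 / (2 * lam) := by
      field_simp [hlam.ne']
      ring
    linarith
  obtain ⟨δ, ⟨hδε, hδlam⟩, hδ⟩ := (((hcont.eventually (gt_mem_nhds hlim)).and
    (gt_mem_nhds (half_pos hlam))).filter_mono nhdsWithin_le_nhds |>.and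
    (self_mem_nhdsWithin (s := Ioi 0))).exists
  exact ⟨δ, hδ, hδlam, hδε.le⟩

/-- **Łojasiewicz-type inequality at a nondegenerate critical point** (Euclidean chart
version of Lemma 3.3). Let `f : ℝ^d → ℝ` be `C²` with `∇f(0) = 0` and Hessian
`H = D(∇f)(0)` positive-definite with smallest eigenvalue `≥ lammin > 0` (i.e.
`⟪H v, v⟫ ≥ lammin ‖v‖²`). Then for every `ε > 0` there is a neighborhood `N` of `0`
such that `0 < f(x) - f(0) ≤ (1/(2 lammin) + ε) ‖∇f(x)‖²` for all `x ∈ N`, `x ≠ 0`. -/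
theorem lojasiewicz_at_nondegenerate_critical_point
    {d : ℕ} (f : EuclideanSpace ℝ (Fin d) → ℝ)
    (hf : ContDiff ℝ 2 f) (hcrit : gradient f 0 = 0)
    (lammin : ℝ) (hlam : 0 < lammin)
    (hH : ∀ v : EuclideanSpace ℝ (Fin d),
      lammin * ‖v‖ ^ 2 ≤ ⟪fderiv ℝ (gradient f) 0 v, v⟫) :
    ∀ ε > 0, ∃ N ∈ nhds (0 : EuclideanSpace ℝ (Fin d)),
      ∀ x ∈ N, x ≠ 0 →
        0 < f x - f 0 ∧ f x - f 0 ≤ (1 / (2 * lammin) + ε) * ‖gradient f x‖ ^ 2 := by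
  intro ε hε
  obtain ⟨δ, hδ, hδlam, hδε⟩ := exists_pos_lt_half_and_div_le hlam hε
  set H := fderiv ℝ (gradient f) 0
  obtain ⟨r, hr, hgH⟩ : ∃ r > 0, ∀ y ∈ ball (0 : EuclideanSpace ℝ (Fin d)) r,
      ‖gradient f y - H y‖ ≤ δ * ‖y‖ := by
    simpa [hcrit] using eventually_nhds_iff_ball.1
      ((hf.differentiable_gradient le_rfl 0).hasFDerivAt.isLittleO.bound hδ)
  refine ⟨ball 0 r, ball_mem_nhds 0 hr, fun x hx hx0 => ?_⟩
  obtain ⟨hlow, hup⟩ := abs_le.1 (abs_sub_sub_half_inner_le_of_norm_gradient_sub_le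
    (fun y _ => hf.differentiable two_ne_zero y) hgH hx)
  refine ⟨?_, ?_⟩
  · nlinarith [hH x, pow_pos (norm_pos_iff.2 hx0) 2]
  · calc f x - f 0
        ≤ (lammin + 2 * δ) / (2 * (lammin - δ) ^ 2) * ‖gradient f x‖ ^ 2 :=
          le_mul_norm_sq_of_mul_norm_sq_le_inner (hH x) hδ.le (by linarith) (hgH x hx)
            (by linarith)
      _ ≤ (1 / (2 * lammin) + ε) * ‖gradient f x‖ ^ 2 := by gcongr
end

section
/- For X = LRᵀ with rank(X) = k and any compact SVD X = USVᵀ (U, V with orthonormal columns, S invertible k×k), the scaled gradient update satisfies LRᵀ − h∇f(X)RR† = [L − h∇f(X)R(RᵀR)^{-1}]Rᵀ, and ∇f(X)RR† = ∇f(X)VVᵀ, i.e., the scaled partial-gradient step on L equals the step X₊ = X − h·P₁ with P₁ the orthogonal projection of ∇f(X) onto T_V = {L̂Vᵀ}. -/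
open Matrix

attribute [local instance] Matrix.frobeniusNormedAddCommGroup Matrix.frobeniusNormedSpace

/-- The continuous linear functional `H ↦ ⟨A, H⟩_F`; `HasFDerivAt f (frobInnerCLM (Gf X)) X`
expresses that `Gf X` is the (Frobenius) gradient of `f` at `X`. -/
noncomputable def frobInnerCLM {m n : ℕ} (A : Matrix (Fin m) (Fin n) ℝ) :
    Matrix (Fin m) (Fin n) ℝ →L[ℝ] ℝ :=
  LinearMap.toContinuousLinearMap
    { toFun := fun H => frobInner A H
      map_add' := by intro H K; simp [frobInner, mul_add, Finset.sum_add_distrib]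
      map_smul' := by intro c H; simp [frobInner, Finset.mul_sum, mul_left_comm] }

/-- **Scaled gradient step = projected gradient step.** For `X = L Rᵀ` of rank `k`
(`L`, `R` of full column rank) with any compact SVD `X = U S Vᵀ` (`S` invertible),
the scaled gradient update on `L` satisfies
`L Rᵀ - h ∇f(X) R R† = [L - h ∇f(X) R (Rᵀ R)⁻¹] Rᵀ` and
`∇f(X) R R† = ∇f(X) V Vᵀ`, i.e. it is the step `X₊ = X - h P₁` with `P₁` the
orthogonal projection of `∇f(X)` onto `T_V`. -/
theorem scaled_gradient_step_eq_projected_step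
    {m n k : ℕ} (f : Matrix (Fin m) (Fin n) ℝ → ℝ)
    (Gf : Matrix (Fin m) (Fin n) ℝ → Matrix (Fin m) (Fin n) ℝ)
    (hgrad : ∀ X, HasFDerivAt f (frobInnerCLM (Gf X)) X)
    (L : Matrix (Fin m) (Fin k) ℝ) (R : Matrix (Fin n) (Fin k) ℝ)
    (hLrank : IsUnit (Lᵀ * L)) (hRrank : IsUnit (Rᵀ * R))
    (U : Matrix (Fin m) (Fin k) ℝ) (S : Matrix (Fin k) (Fin k) ℝ)
    (V : Matrix (Fin n) (Fin k) ℝ)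
    (hU : Uᵀ * U = 1) (hV : Vᵀ * V = 1) (hS : IsUnit S)
    (hSVD : L * Rᵀ = U * S * Vᵀ) (h : ℝ) :
    L * Rᵀ - h • (Gf (L * Rᵀ) * R * (Rᵀ * R)⁻¹ * Rᵀ) =
        (L - h • (Gf (L * Rᵀ) * R * (Rᵀ * R)⁻¹)) * Rᵀ ∧
    Gf (L * Rᵀ) * R * (Rᵀ * R)⁻¹ * Rᵀ = Gf (L * Rᵀ) * V * Vᵀ := by
  have hSdet : IsUnit S.det := (Matrix.isUnit_iff_isUnit_det S).mp hS
  set M : Matrix (Fin k) (Fin k) ℝ := Lᵀᵀᵀ * U * S⁻¹ᵀ with hMdef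
  have hVt : Vᵀ = S⁻¹ * Uᵀ * (L * Rᵀ) := by
    rw [hSVD]
    symm
    calc S⁻¹ * Uᵀ * (U * S * Vᵀ) = S⁻¹ * ((Uᵀ * U) * (S * Vᵀ)) := by
          simp only [Matrix.mul_assoc]
      _ = Vᵀ := by
          rw [hU, Matrix.one_mul, ← Matrix.mul_assoc,
            Matrix.nonsing_inv_mul S hSdet, Matrix.one_mul]
  have hVRM : V = R * M := by
    have := congrArg Matrix.transpose hVt
    simpa [Matrix.transpose_mul, Matrix.mul_assoc, hMdef] using this
  have hM1 : Mᵀ * (Rᵀ * R) * M = 1 := by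
    have : (R * M)ᵀ * (R * M) = 1 := by rw [← hVRM]; exact hV
    simpa [Matrix.transpose_mul, Matrix.mul_assoc] using this
  have hM1' : (Mᵀ * (Rᵀ * R)) * M = 1 := by simpa [Matrix.mul_assoc] using hM1
  have hM1'' : M * (Mᵀ * (Rᵀ * R)) = 1 := mul_eq_one_comm.mp hM1'
  have hinv : (Rᵀ * R)⁻¹ = M * Mᵀ := by
    apply Matrix.inv_eq_left_inv
    calc M * Mᵀ * (Rᵀ * R) = M * (Mᵀ * (Rᵀ * R)) := by rw [Matrix.mul_assoc]
      _ = 1 := hM1''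
  constructor
  · rw [Matrix.sub_mul, Matrix.smul_mul, Matrix.mul_assoc]
  · rw [hinv, hVRM]
    simp [Matrix.transpose_mul, Matrix.mul_assoc]
end

section
/- For a differentiable φ with λ-Lipschitz gradient, backtracking line search h = h̄, h̄β, h̄β², … (β ∈ (0,1)) terminated at the first h satisfying the Armijo condition φ(x) − φ(x − h∇φ(x)) ≥ hγ‖∇φ(x)‖² returns a step size h ≥ min{(2β/λ)(1 − γ), h̄}, and hence φ(x) − φ(x₊) ≥ min{(2/λ)βγ(1 − γ), h̄γ}·‖∇φ(x)‖². -/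
/-!
The descent lemma `φ (x + d) ≤ φ x + ⟪∇φ x, d⟫ + (λ/2)‖d‖²` applied to `d = -h ∇φ x` shows that
every step `0 ≤ h ≤ (2/λ)(1 - γ)` satisfies the Armijo condition. Hence if backtracking stops at
`h̄ βⁱ` with `i > 0`, the rejected step `h̄ βⁱ⁻¹` exceeded `(2/λ)(1 - γ)`, and `h̄ βⁱ` exceeds
`β` times that bound; if `i = 0` the step is `h̄`. The decrease bound is the Armijo condition
at the accepted step.
-/

open Set

theorem image_add_le_of_lipschitz_gradient
    {E : Type*} [NormedAddCommGroup E] [InnerProductSpace ℝ E] [CompleteSpace E]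
    {φ : E → ℝ} (hφ : Differentiable ℝ φ) {lam : ℝ}
    (hLip : ∀ u v : E, ‖gradient φ u - gradient φ v‖ ≤ lam * ‖u - v‖) (x d : E) :
    φ (x + d) ≤ φ x + inner ℝ (gradient φ x) d + lam / 2 * ‖d‖ ^ 2 := by
  -- `φ` along the ray minus the quadratic model; the Lipschitz bound makes `ψ' ≤ 0` for `t > 0`.
  set ψ : ℝ → ℝ := fun t ↦
    φ (x + t • d) - t * inner ℝ (gradient φ x) d - lam / 2 * t ^ 2 * ‖d‖ ^ 2
  have hψ (t : ℝ) : HasDerivAt ψ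
      (inner ℝ (gradient φ (x + t • d) - gradient φ x) d - lam * t * ‖d‖ ^ 2) t := by
    have hline : HasDerivAt (fun s : ℝ ↦ x + s • d) d t := by
      simpa using ((hasDerivAt_id t).smul_const d).const_add x
    have hφt := (hφ (x + t • d)).hasGradientAt.hasFDerivAt.comp_hasDerivAt t hline
    refine ((hφt.sub ((hasDerivAt_id t).mul_const (inner ℝ (gradient φ x) d))).sub
      (((hasDerivAt_pow 2 t).const_mul (lam / 2)).mul_const (‖d‖ ^ 2))).congr_deriv ?_
    simp only [InnerProductSpace.toDual_apply_apply, inner_sub_left]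
    ring
  have hanti : AntitoneOn ψ (Ici 0) := by
    refine antitoneOn_of_hasDerivWithinAt_nonpos (convex_Ici 0)
      (fun t _ ↦ (hψ t).continuousAt.continuousWithinAt)
      (fun t _ ↦ (hψ t).hasDerivWithinAt) fun t ht ↦ ?_
    rw [interior_Ici, mem_Ioi] at ht
    have hgrad : ‖gradient φ (x + t • d) - gradient φ x‖ ≤ lam * (t * ‖d‖) := by
      simpa [norm_smul, abs_of_pos ht] using hLip (x + t • d) x
    calc inner ℝ (gradient φ (x + t • d) - gradient φ x) d - lam * t * ‖d‖ ^ 2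
        ≤ ‖gradient φ (x + t • d) - gradient φ x‖ * ‖d‖ - lam * t * ‖d‖ ^ 2 := by
          gcongr; exact real_inner_le_norm _ _
      _ ≤ lam * (t * ‖d‖) * ‖d‖ - lam * t * ‖d‖ ^ 2 := by gcongr
      _ = 0 := by ring
  have hψ01 := hanti self_mem_Ici (zero_le_one' ℝ) zero_le_one
  simp only [ψ, one_smul, zero_smul, add_zero, one_mul, one_pow, zero_mul, sub_zero, mul_one,
    ne_eq, OfNat.ofNat_ne_zero, not_false_eq_true, zero_pow] at hψ01
  linarith

theorem armijo_of_mul_le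
    {E : Type*} [NormedAddCommGroup E] [InnerProductSpace ℝ E] [CompleteSpace E]
    {φ : E → ℝ} (hφ : Differentiable ℝ φ) {lam : ℝ}
    (hLip : ∀ u v : E, ‖gradient φ u - gradient φ v‖ ≤ lam * ‖u - v‖) (x : E) {γ h : ℝ}
    (hh : 0 ≤ h) (hhlam : h * lam ≤ 2 * (1 - γ)) :
    φ x - φ (x - h • gradient φ x) ≥ h * γ * ‖gradient φ x‖ ^ 2 := by
  have hdesc := image_add_le_of_lipschitz_gradient hφ hLip x (-(h • gradient φ x))
  rw [← sub_eq_add_neg, inner_neg_right, real_inner_smul_right, real_inner_self_eq_norm_sq,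
    norm_neg, norm_smul, Real.norm_of_nonneg hh] at hdesc
  have hslack : 0 ≤ h * ‖gradient φ x‖ ^ 2 * (2 * (1 - γ) - h * lam) := by
    have := sub_nonneg.2 hhlam
    positivity
  nlinarith

theorem backtracking_step_ge {P : ℝ → Prop} {c hbar β : ℝ} (hP : ∀ h, 0 ≤ h → h ≤ c → P h)
    (hhbar : 0 ≤ hbar) (hβ : 0 ≤ β) {i : ℕ} (hfail : ∀ j < i, ¬ P (hbar * β ^ j)) :
    min (β * c) hbar ≤ hbar * β ^ i := by
  cases i with
  | zero => simp
  | succ k =>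
    have hck : c < hbar * β ^ k :=
      lt_of_not_ge fun hle ↦ hfail k k.lt_succ_self (hP _ (by positivity) hle)
    calc min (β * c) hbar ≤ β * c := min_le_left _ _
      _ ≤ β * (hbar * β ^ k) := by gcongr
      _ = hbar * β ^ (k + 1) := by ring

theorem armijo_backtracking_step_bound_general
    {E : Type*} [NormedAddCommGroup E] [InnerProductSpace ℝ E] [CompleteSpace E]
    (φ : E → ℝ) (hφ : Differentiable ℝ φ) (lam : ℝ) (hlam : 0 < lam)
    (hLip : ∀ u v : E, ‖gradient φ u - gradient φ v‖ ≤ lam * ‖u - v‖)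
    (γ β hbar : ℝ) (hγ0 : 0 < γ) (hβ0 : 0 < β)
    (hhbar : 0 < hbar) (x : E) (i : ℕ)
    (hi : φ x - φ (x - (hbar * β ^ i) • gradient φ x) ≥
      (hbar * β ^ i) * γ * ‖gradient φ x‖ ^ 2)
    (hfail : ∀ j < i, ¬ (φ x - φ (x - (hbar * β ^ j) • gradient φ x) ≥
      (hbar * β ^ j) * γ * ‖gradient φ x‖ ^ 2)) :
    hbar * β ^ i ≥ min (2 * β / lam * (1 - γ)) hbar ∧
    φ x - φ (x - (hbar * β ^ i) • gradient φ x) ≥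
      min (2 / lam * β * γ * (1 - γ)) (hbar * γ) * ‖gradient φ x‖ ^ 2 := by
  have hstep : min (2 * β / lam * (1 - γ)) hbar ≤ hbar * β ^ i := by
    have := backtracking_step_ge (c := 2 * (1 - γ) / lam)
      (fun h hh hle ↦ armijo_of_mul_le hφ hLip x hh ((le_div_iff₀ hlam).1 hle))
      hhbar.le hβ0.le hfail
    convert this using 2
    ring
  refine ⟨hstep, le_trans ?_ hi⟩
  rw [show 2 / lam * β * γ * (1 - γ) = 2 * β / lam * (1 - γ) * γ by ring,
    ← min_mul_of_nonneg _ _ hγ0.le]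
  gcongr

/-- **Armijo backtracking returns a not-too-small step.** For a differentiable `φ` with
`lam`-Lipschitz gradient, backtracking `h = h̄, h̄β, h̄β², …` terminated at the first
index `i` at which the Armijo condition
`φ x - φ (x - h • ∇φ x) ≥ h γ ‖∇φ x‖²` holds returns a step size
`h̄ β^i ≥ min {(2β/lam)(1 - γ), h̄}`, and hence
`φ x - φ x₊ ≥ min {(2/lam) β γ (1 - γ), h̄ γ} ‖∇φ x‖²`. -/
theorem armijo_backtracking_step_bound
    {E : Type*} [NormedAddCommGroup E] [InnerProductSpace ℝ E] [CompleteSpace E]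
    (φ : E → ℝ) (hφ : Differentiable ℝ φ) (lam : ℝ) (hlam : 0 < lam)
    (hLip : ∀ u v : E, ‖gradient φ u - gradient φ v‖ ≤ lam * ‖u - v‖)
    (γ β hbar : ℝ) (hγ0 : 0 < γ) (hγ1 : γ < 1) (hβ0 : 0 < β) (hβ1 : β < 1)
    (hhbar : 0 < hbar) (x : E) (i : ℕ)
    (hi : φ x - φ (x - (hbar * β ^ i) • gradient φ x) ≥
      (hbar * β ^ i) * γ * ‖gradient φ x‖ ^ 2)
    (hfail : ∀ j < i, ¬ (φ x - φ (x - (hbar * β ^ j) • gradient φ x) ≥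
      (hbar * β ^ j) * γ * ‖gradient φ x‖ ^ 2)) :
    hbar * β ^ i ≥ min (2 * β / lam * (1 - γ)) hbar ∧
    φ x - φ (x - (hbar * β ^ i) • gradient φ x) ≥
      min (2 / lam * β * γ * (1 - γ)) (hbar * γ) * ‖gradient φ x‖ ^ 2 :=
  armijo_backtracking_step_bound_general φ hφ lam hlam hLip γ β hbar hγ0 hβ0 hhbar x i hi hfail
end
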